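/- Subject expansion: if t is closed, t →wh u, and ⊢ u : A is derivable in the tree type system, then ⊢ t : A is derivable. -/

import Mathlib

/-! # Tree intersection types -/

mutual
/-- Linear types: `A ::= ⋆ | T → A`. -/
inductive LinTy : Type where
  | star : LinTy
  | arr : TreeTy → LinTy → LinTy
/-- Generic types: linear types or tree types. -/
inductive GenTy : Type where
  | lin : LinTy → GenTy
  | tree : TreeTy → GenTy
/-- Tree types: finite sequences of generic types. -/
inductive TreeTy : Type where
  | node : List GenTy → TreeTy
end

mutual
/-- Leaves of a generic type. -/
def GenTy.leaves : GenTy → List LinTy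
  | .lin A => [A]
  | .tree T => TreeTy.leaves T
  termination_by g => sizeOf g
/-- Leaves extraction on tree types. -/
def TreeTy.leaves : TreeTy → List LinTy
  | .node gs => gs.attach.flatMap (fun g => GenTy.leaves g.1)
  termination_by T => sizeOf T
  decreasing_by simp_wf; have := List.sizeOf_lt_of_mem g.2; omega
end

/-- Concatenation `⊎` of tree types (sequences). -/
def TreeTy.cat : TreeTy → TreeTy → TreeTy
  | .node a, .node b => .node (a ++ b)

mutual
/-- Weight (size) of a linear type, with parameter `X`. -/
def LinTy.weight (X : ℕ) : LinTy → ℕ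
  | .star => 0
  | .arr T A => max (TreeTy.weight X T) (LinTy.weight X A + 1)
  termination_by A => sizeOf A
def GenTy.weight (X : ℕ) : GenTy → ℕ
  | .lin A => LinTy.weight X A
  | .tree T => TreeTy.weight X T
  termination_by g => sizeOf g
def TreeTy.weight (X : ℕ) : TreeTy → ℕ
  | .node gs => X + (gs.attach.map (fun g => GenTy.weight X g.1)).foldr max 0
  termination_by T => sizeOf T
  decreasing_by simp_wf; have := List.sizeOf_lt_of_mem g.2; omega
end

mutual
/-- Hereditary absence of empty sequences (every leaf context ends in `⋆`). -/
inductive LinTy.Good : LinTy → Prop where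
  | star : LinTy.Good .star
  | arr {T A} : TreeTy.Good T → LinTy.Good A → LinTy.Good (.arr T A)
inductive GenTy.Good : GenTy → Prop where
  | lin {A} : LinTy.Good A → GenTy.Good (.lin A)
  | tree {T} : TreeTy.Good T → GenTy.Good (.tree T)
inductive TreeTy.Good : TreeTy → Prop where
  | node {gs : List GenTy} : gs ≠ [] → (∀ g ∈ gs, GenTy.Good g) → TreeTy.Good (.node gs)
end

/-! ## Leaf contexts -/

/-- One-hole contexts into tree types whose hole sits at a leaf position. -/
inductive LeafCtx : Type where
  | here (l r : List GenTy) : LeafCtx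
  | deeper (l : List GenTy) (L : LeafCtx) (r : List GenTy) : LeafCtx

/-- Plugging a linear type into a leaf context. -/
def LeafCtx.plug : LeafCtx → LinTy → TreeTy
  | .here l r, A => .node (l ++ .lin A :: r)
  | .deeper l L r, A => .node (l ++ .tree (L.plug A) :: r)

/-- Number of leaves strictly to the left of the hole. -/
def LeafCtx.holeIdx : LeafCtx → ℕ
  | .here l _ => (TreeTy.node l).leaves.length
  | .deeper l L _ => (TreeTy.node l).leaves.length + L.holeIdx

/-! ## Type contexts -/

mutual
/-- Linear type contexts: `𝕃c ::= ⟨·⟩ | T → 𝕃c | 𝕋 → A`. -/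
inductive LinCtx : Type where
  | hole : LinCtx
  | arrR : TreeTy → LinCtx → LinCtx
  | arrL : TreeCtx → LinTy → LinCtx
/-- Tree type contexts. -/
inductive TreeCtx : Type where
  | node : List GenTy → GenCtx → List GenTy → TreeCtx
/-- Generic type contexts. -/
inductive GenCtx : Type where
  | lin : LinCtx → GenCtx
  | tree : TreeCtx → GenCtx
end

mutual
def LinCtx.plug : LinCtx → LinTy → LinTy
  | .hole, B => B
  | .arrR T C, B => .arr T (C.plug B)
  | .arrL C A, B => .arr (C.plug B) A
def TreeCtx.plug : TreeCtx → LinTy → TreeTy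
  | .node l C r, B => .node (l ++ C.plug B :: r)
def GenCtx.plug : GenCtx → LinTy → GenTy
  | .lin C, B => .lin (C.plug B)
  | .tree C, B => .tree (C.plug B)
end

mutual
/-- Branch size of a linear type context. -/
def LinCtx.bsize (X : ℕ) : LinCtx → ℕ
  | .hole => 0
  | .arrR _ C => 1 + C.bsize X
  | .arrL C _ => C.bsize X
def TreeCtx.bsize (X : ℕ) : TreeCtx → ℕ
  | .node _ C _ => X + C.bsize X
def GenCtx.bsize (X : ℕ) : GenCtx → ℕ
  | .lin C => C.bsize X
  | .tree C => C.bsize X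
end

/-! # λ-terms (de Bruijn) and Closed Call-by-Name -/

inductive Term : Type where
  | var : ℕ → Term
  | lam : Term → Term
  | app : Term → Term → Term

/-- Shifting of free indices `≥ c` by `d`. -/
def Term.lift (d : ℕ) : ℕ → Term → Term
  | c, .var n => if n < c then .var n else .var (n + d)
  | c, .lam t => .lam (Term.lift d (c+1) t)
  | c, .app t u => .app (Term.lift d c t) (Term.lift d c u)

/-- Capture-avoiding substitution of `u` for index `k`. -/
def Term.subst (u : Term) : ℕ → Term → Term
  | k, .var n => if n = k then Term.lift k 0 u else if k < n then .var (n-1) else .var n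
  | k, .lam t => .lam (Term.subst u (k+1) t)
  | k, .app t s => .app (Term.subst u k t) (Term.subst u k s)

/-- `t{x₀ := u}`. -/
def Term.subst0 (t u : Term) : Term := Term.subst u 0 t

def Term.ClosedUnder : Term → ℕ → Prop
  | .var n, k => n < k
  | .lam t, k => t.ClosedUnder (k+1)
  | .app t u, k => t.ClosedUnder k ∧ u.ClosedUnder k

/-- Closed terms: no free variables. -/
def Term.Closed (t : Term) : Prop := t.ClosedUnder 0

/-- Occurrence of a free variable. -/
def Term.FreeIn : Term → ℕ → Prop
  | .var n, x => n = x
  | .lam t, x => t.FreeIn (x+1)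
  | .app t u, x => t.FreeIn x ∨ u.FreeIn x

/-- Weak head reduction `(λy.t)u r₁…r_h →wh t{y:=u} r₁…r_h`. -/
inductive Whr : Term → Term → Prop where
  | beta (t u : Term) : Whr (.app (.lam t) u) (t.subst0 u)
  | appL {t t' : Term} (u : Term) : Whr t t' → Whr (.app t u) (.app t' u)

/-- `n`-step weak head reduction. -/
inductive WhN : ℕ → Term → Term → Prop where
  | refl (t : Term) : WhN 0 t t
  | step {n t u v} : Whr t u → WhN n u v → WhN (n+1) t v

/-! # Type environments and the tree type system -/

/-- Type environments: maps from (de Bruijn) variables to tree types. -/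
def Env : Type := ℕ → TreeTy

def Env.empty : Env := fun _ => .node []

/-- Pointwise concatenation `Γ ⊎ Δ`. -/
def Env.union (Γ Δ : Env) : Env := fun x => (Γ x).cat (Δ x)

/-- Environment of the variable axiom: `x : [A]`. -/
def Env.single (x : ℕ) (A : LinTy) : Env :=
  fun y => if y = x then .node [.lin A] else .node []

/-- Environment extension `Γ, x₀:T` (de Bruijn cons). -/
def Env.cons (T : TreeTy) (Γ : Env) : Env
  | 0 => T
  | n+1 => Γ n

/-- Wrap a (non-empty) tree type in one extra sequence layer. -/
def TreeTy.wrap : TreeTy → TreeTy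
  | .node [] => .node []
  | T => .node [.tree T]

/-- `[Γ]`: wrap each (non-empty) type of the environment in one extra layer. -/
def Env.wrap (Γ : Env) : Env := fun x => (Γ x).wrap

/-- Finite union of environments. -/
def Env.unionF {n : ℕ} (Γs : Fin n → Env) : Env :=
  (List.ofFn Γs).foldr Env.union Env.empty

/-- Tree type derivations. -/
inductive Deriv : Env → Term → GenTy → Type where
  | var (x : ℕ) (A : LinTy) : Deriv (Env.single x A) (.var x) (.lin A)
  | lam {Γ : Env} {T : TreeTy} {t : Term} {A : LinTy} :
      Deriv (Env.cons T Γ) t (.lin A) → Deriv Γ (.lam t) (.lin (.arr T A))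
  | lamStar (t : Term) : Deriv Env.empty (.lam t) (.lin .star)
  | app {Γ Δ : Env} {t u : Term} {T : TreeTy} {A : LinTy} :
      Deriv Γ t (.lin (.arr T A)) → Deriv Δ u (.tree T) →
      Deriv (Env.union Γ Δ) (.app t u) (.lin A)
  | many {t : Term} (n : ℕ) (Γs : Fin n → Env) (Gs : Fin n → GenTy)
      (prems : ∀ i, Deriv (Γs i) t (Gs i)) :
      Deriv (Env.wrap (Env.unionF Γs)) t (.tree (.node (List.ofFn Gs)))
  | none (t : Term) : Deriv Env.empty t (.tree (.node []))

/-- Size of a derivation: number of rules that are not T-many/T-none. -/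
def Deriv.size : ∀ {Γ t G}, Deriv Γ t G → ℕ
  | _, _, _, .var _ _ => 1
  | _, _, _, .lam π => π.size + 1
  | _, _, _, .lamStar _ => 1
  | _, _, _, .app π ρ => π.size + ρ.size + 1
  | _, _, _, .many n _ _ prems => ∑ i : Fin n, (prems i).size
  | _, _, _, .none _ => 0

/-- Weight of a weighted derivation, with parameter `X`. -/
def Deriv.weight (X : ℕ) : ∀ {Γ t G}, Deriv Γ t G → ℕ
  | _, _, _, .var _ A => A.weight X
  | _, _, _, .lam (T := T) (A := A) π => max (π.weight X) (LinTy.weight X (.arr T A))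
  | _, _, _, .lamStar _ => 0
  | _, _, _, .app π ρ => max (π.weight X) (ρ.weight X)
  | _, _, _, .many n _ _ prems => X + (Finset.univ.sup fun i => (prems i).weight X)
  | _, _, _, .none _ => 0

/-- `SubD π n π'`: the judgment of `π'` occurs in `π`, crossing `n` T-many rules
descending from it to the root. -/
inductive SubD : ∀ {Γ t G}, Deriv Γ t G → ℕ → ∀ {Γ' u G'}, Deriv Γ' u G' → Prop where
  | refl {Γ t G} (π : Deriv Γ t G) : SubD π 0 π
  | lam {Γ T t A} {π : Deriv (Env.cons T Γ) t (.lin A)} {n} {Γ' u G'} {π' : Deriv Γ' u G'} :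
      SubD π n π' → SubD (Deriv.lam π) n π'
  | appL {Γ Δ t u T A} {π : Deriv Γ t (.lin (.arr T A))} {ρ : Deriv Δ u (.tree T)}
      {n} {Γ' v G'} {π' : Deriv Γ' v G'} :
      SubD π n π' → SubD (Deriv.app π ρ) n π'
  | appR {Γ Δ t u T A} {π : Deriv Γ t (.lin (.arr T A))} {ρ : Deriv Δ u (.tree T)}
      {n} {Γ' v G'} {π' : Deriv Γ' v G'} :
      SubD ρ n π' → SubD (Deriv.app π ρ) n π'
  | many {t k} {Γs : Fin k → Env} {Gs : Fin k → GenTy} {prems : ∀ i, Deriv (Γs i) t (Gs i)}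
      (i : Fin k) {n} {Γ' u G'} {π' : Deriv Γ' u G'} :
      SubD (prems i) n π' → SubD (Deriv.many k Γs Gs prems) (n+1) π'

/-!
A weak head step is either a root β-step or a step in the head of an application; the latter
case follows from the induction hypothesis after inverting the application rule. The β-case
`(λ.s) r →wh s{0 := r}` is anti-substitution: a derivation of `s{k := u}` with `u` closed is
pulled apart into a derivation of `s` in which the variable `k` receives the tree type `T`
collecting the types at which the copies of `u` were typed, together with a derivation
`⊢ u : T`. Since a closed term is only ever typed in the empty environment, derivations
`⊢ u : T` can be concatenated, wrapped and regrouped freely by the T-many rule.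
-/

theorem TreeTy.cat_eq_nil {T S : TreeTy} (h : T.cat S = .node []) :
    T = .node [] ∧ S = .node [] := by
  cases T
  cases S
  simp_all [TreeTy.cat]

theorem TreeTy.eq_nil_of_wrap_eq_nil {T : TreeTy} (h : T.wrap = .node []) : T = .node [] := by
  rcases T with ⟨_ | _⟩
  · rfl
  · simp [TreeTy.wrap] at h

def TreeTy.catF {n : ℕ} (Ts : Fin n → TreeTy) : TreeTy :=
  (List.ofFn Ts).foldr TreeTy.cat (.node [])

theorem TreeTy.catF_succ {n : ℕ} (Ts : Fin (n + 1) → TreeTy) :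
    TreeTy.catF Ts = (Ts 0).cat (TreeTy.catF fun i => Ts i.succ) := by
  simp [TreeTy.catF, List.ofFn_succ]

namespace Env

theorem empty_union (Γ : Env) : Env.union Env.empty Γ = Γ := by
  funext x
  show (TreeTy.node []).cat (Γ x) = Γ x
  cases Γ x
  rfl

theorem eq_empty_of_union_eq_empty {Γ Δ : Env} (h : Env.union Γ Δ = Env.empty) :
    Γ = Env.empty ∧ Δ = Env.empty :=
  ⟨funext fun x => (TreeTy.cat_eq_nil (congrFun h x)).1,
    funext fun x => (TreeTy.cat_eq_nil (congrFun h x)).2⟩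

theorem eq_empty_of_wrap_eq_empty {Γ : Env} (h : Env.wrap Γ = Env.empty) : Γ = Env.empty :=
  funext fun x => TreeTy.eq_nil_of_wrap_eq_nil (congrFun h x)

theorem unionF_succ {n : ℕ} (Γs : Fin (n + 1) → Env) :
    Env.unionF Γs = Env.union (Γs 0) (Env.unionF fun i => Γs i.succ) := by
  simp [Env.unionF, List.ofFn_succ]

theorem unionF_apply_eq_nil {n : ℕ} {Γs : Fin n → Env} {x : ℕ}
    (h : ∀ i, Γs i x = .node []) : Env.unionF Γs x = .node [] := by
  induction n with
  | zero => rfl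
  | succ m ih =>
    rw [unionF_succ]
    show (Γs 0 x).cat _ = _
    rw [h 0, ih fun i => h i.succ]
    rfl

theorem unionF_eq_empty_iff {n : ℕ} {Γs : Fin n → Env} :
    Env.unionF Γs = Env.empty ↔ ∀ i, Γs i = Env.empty := by
  refine ⟨fun h => ?_, fun h => funext fun x => unionF_apply_eq_nil fun i => by rw [h i]; rfl⟩
  induction n with
  | zero => exact fun i => i.elim0
  | succ m ih =>
    rw [unionF_succ] at h
    obtain ⟨h0, hsucc⟩ := eq_empty_of_union_eq_empty h
    exact Fin.cases h0 (ih hsucc)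

/-- The environment of `s` when `s{k := u}` is typed in `Γ`, with `k` of type `T`. -/
def insert (k : ℕ) (T : TreeTy) (Γ : Env) : Env :=
  fun x => if x < k then Γ x else if x = k then T else Γ (x - 1)

theorem insert_zero (T : TreeTy) (Γ : Env) : Env.insert 0 T Γ = Env.cons T Γ := by
  funext x
  cases x <;> simp [Env.insert, Env.cons]

theorem insert_succ_cons (k : ℕ) (T S : TreeTy) (Γ : Env) :
    Env.insert (k + 1) T (Env.cons S Γ) = Env.cons S (Env.insert k T Γ) := by
  funext x
  cases x with
  | zero => simp [Env.insert, Env.cons]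
  | succ n =>
    simp only [Env.insert, Env.cons, Nat.add_lt_add_iff_right, Nat.add_right_cancel_iff]
    split_ifs
    · rfl
    · rfl
    · obtain ⟨m, rfl⟩ : ∃ m, n = m + 1 := ⟨n - 1, by omega⟩
      rfl

theorem insert_nil_empty (k : ℕ) : Env.insert k (.node []) Env.empty = Env.empty := by
  funext x
  simp only [Env.insert]
  split_ifs <;> rfl

theorem insert_singleton_empty (k : ℕ) (A : LinTy) :
    Env.insert k (.node [.lin A]) Env.empty = Env.single k A := by
  funext y
  simp only [Env.insert, Env.single]
  split_ifs <;> first | rfl | omega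

theorem insert_nil_single {n k : ℕ} (h : n ≠ k) (A : LinTy) :
    Env.insert k (.node []) (Env.single (if k < n then n - 1 else n) A) = Env.single n A := by
  funext y
  simp only [Env.insert, Env.single]
  split_ifs <;> first | rfl | omega

theorem union_insert (k : ℕ) (T₁ T₂ : TreeTy) (Γ Δ : Env) :
    Env.union (Env.insert k T₁ Γ) (Env.insert k T₂ Δ) =
      Env.insert k (T₁.cat T₂) (Env.union Γ Δ) := by
  funext x
  show (Env.insert k T₁ Γ x).cat (Env.insert k T₂ Δ x) = _
  simp only [Env.insert]
  split_ifs <;> rfl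

theorem wrap_insert (k : ℕ) (T : TreeTy) (Γ : Env) :
    Env.wrap (Env.insert k T Γ) = Env.insert k T.wrap (Env.wrap Γ) := by
  funext x
  show (Env.insert k T Γ x).wrap = _
  simp only [Env.insert]
  split_ifs <;> rfl

theorem unionF_insert {n : ℕ} (k : ℕ) (Ts : Fin n → TreeTy) (Γs : Fin n → Env) :
    Env.unionF (fun i => Env.insert k (Ts i) (Γs i)) =
      Env.insert k (TreeTy.catF Ts) (Env.unionF Γs) := by
  induction n with
  | zero => exact (insert_nil_empty k).symm
  | succ m ih => rw [unionF_succ, unionF_succ Γs, ih, union_insert, TreeTy.catF_succ]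

end Env

theorem Term.subst_var_self {u : Term} (hu : u.Closed) (k : ℕ) :
    Term.subst u k (.var k) = u := by
  have lift_closed : ∀ (t : Term) (c : ℕ), t.ClosedUnder c → Term.lift k c t = t := by
    intro t
    induction t with
    | var n => intro c h; simp [Term.lift, show n < c from h]
    | lam t ih => intro c h; simp [Term.lift, ih _ h]
    | app t s iht ihs => intro c h; simp [Term.lift, iht _ h.1, ihs _ h.2]
  simp [Term.subst, lift_closed u 0 hu]

theorem Term.subst_var_of_ne (u : Term) {n k : ℕ} (h : n ≠ k) :
    Term.subst u k (.var n) = .var (if k < n then n - 1 else n) := by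
  by_cases hkn : k < n <;> simp [Term.subst, h, hkn]

namespace Deriv

def castEnv {Γ Δ : Env} {t : Term} {G : GenTy} (h : Γ = Δ) (π : Deriv Γ t G) : Deriv Δ t G :=
  h ▸ π

theorem env_apply_eq_nil {Γ : Env} {t : Term} {G : GenTy} (π : Deriv Γ t G) {k : ℕ}
    (ht : t.ClosedUnder k) {x : ℕ} (hx : k ≤ x) : Γ x = .node [] := by
  induction π generalizing k x with
  | var y A =>
    show (if x = y then _ else _) = _
    rw [if_neg (by simp only [Term.ClosedUnder] at ht; omega)]
  | lam _ ih => exact ih (k := k + 1) (x := x + 1) ht (by omega)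
  | lamStar => rfl
  | app _ _ ih₁ ih₂ =>
    show TreeTy.cat _ _ = _
    rw [ih₁ ht.1 hx, ih₂ ht.2 hx]
    rfl
  | many n Γs Gs prems ih =>
    show (Env.unionF Γs x).wrap = _
    rw [Env.unionF_apply_eq_nil fun i => ih i ht hx]
    rfl
  | none => rfl

theorem env_eq_empty {Γ : Env} {t : Term} {G : GenTy} (π : Deriv Γ t G) (ht : t.Closed) :
    Γ = Env.empty :=
  funext fun _ => π.env_apply_eq_nil ht (Nat.zero_le _)

theorem app_inv {Γ : Env} {t v : Term} {A : LinTy} (π : Deriv Γ (.app t v) (.lin A)) :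
    ∃ Γ₁ Γ₂ T, Γ = Env.union Γ₁ Γ₂ ∧
      Nonempty (Deriv Γ₁ t (.lin (.arr T A))) ∧ Nonempty (Deriv Γ₂ v (.tree T)) := by
  cases π with
  | app π₁ π₂ => exact ⟨_, _, _, rfl, ⟨π₁⟩, ⟨π₂⟩⟩

theorem nonempty_tree_iff {u : Term} {gs : List GenTy} :
    Nonempty (Deriv Env.empty u (.tree (.node gs))) ↔
      ∀ g ∈ gs, Nonempty (Deriv Env.empty u g) := by
  constructor
  · rintro ⟨π⟩
    generalize hΓ : Env.empty = Γ at π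
    generalize hG : GenTy.tree (.node gs) = G at π
    cases π with
    | many n Γs Gs prems =>
      cases hG
      have hΓs := Env.unionF_eq_empty_iff.mp (Env.eq_empty_of_wrap_eq_empty hΓ.symm)
      rw [← hΓ]
      intro g hg
      obtain ⟨i, rfl⟩ := List.mem_ofFn.mp hg
      exact ⟨(prems i).castEnv (hΓs i)⟩
    | none => cases hG; simp
    | _ => cases hG
  · intro h
    have π := Deriv.many gs.length (fun _ => Env.empty) gs.get fun i => (h _ (gs.get_mem i)).some
    rw [Env.unionF_eq_empty_iff.mpr fun _ => rfl, List.ofFn_get] at π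
    exact ⟨π⟩

theorem nonempty_tree_cat {u : Term} {T₁ T₂ : TreeTy}
    (h₁ : Nonempty (Deriv Env.empty u (.tree T₁)))
    (h₂ : Nonempty (Deriv Env.empty u (.tree T₂))) :
    Nonempty (Deriv Env.empty u (.tree (T₁.cat T₂))) := by
  cases T₁
  cases T₂
  rw [nonempty_tree_iff] at h₁ h₂
  exact nonempty_tree_iff.mpr fun g hg => (List.mem_append.mp hg).elim (h₁ g) (h₂ g)

theorem nonempty_tree_catF {u : Term} {n : ℕ} {Ts : Fin n → TreeTy}
    (h : ∀ i, Nonempty (Deriv Env.empty u (.tree (Ts i)))) :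
    Nonempty (Deriv Env.empty u (.tree (TreeTy.catF Ts))) := by
  induction n with
  | zero => exact ⟨.none u⟩
  | succ m ih =>
    rw [TreeTy.catF_succ]
    exact nonempty_tree_cat (h 0) (ih fun i => h i.succ)

theorem nonempty_tree_wrap {u : Term} {T : TreeTy} (h : Nonempty (Deriv Env.empty u (.tree T))) :
    Nonempty (Deriv Env.empty u (.tree T.wrap)) := by
  rcases T with ⟨_ | ⟨g, gs⟩⟩
  · exact ⟨.none u⟩
  · exact nonempty_tree_iff.mpr fun g' hg' => List.mem_singleton.mp hg' ▸ h

end Deriv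

section AntiSubstitution

variable {u : Term}

theorem antisubst_var (hu : u.Closed) {Γ : Env} {w : Term} {A : LinTy}
    (π : Deriv Γ w (.lin A)) {n k : ℕ} (hs : Term.subst u k (.var n) = w) :
    ∃ T, Nonempty (Deriv (Env.insert k T Γ) (.var n) (.lin A)) ∧
      Nonempty (Deriv Env.empty u (.tree T)) := by
  rcases eq_or_ne n k with rfl | hnk
  · rw [Term.subst_var_self hu] at hs
    subst hs
    obtain rfl := π.env_eq_empty hu
    refine ⟨.node [.lin A],
      ⟨(Deriv.var n A).castEnv (Env.insert_singleton_empty n A).symm⟩, ?_⟩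
    exact Deriv.nonempty_tree_iff.mpr fun g hg => List.mem_singleton.mp hg ▸ ⟨π⟩
  · rw [Term.subst_var_of_ne u hnk] at hs
    subst hs
    cases π
    exact ⟨.node [], ⟨(Deriv.var n A).castEnv (Env.insert_nil_single hnk A).symm⟩,
      ⟨.none u⟩⟩

theorem antisubst (hu : u.Closed) {Γ : Env} {w : Term} {G : GenTy} (π : Deriv Γ w G)
    (s : Term) (k : ℕ) (hs : Term.subst u k s = w) :
    ∃ T, Nonempty (Deriv (Env.insert k T Γ) s G) ∧ Nonempty (Deriv Env.empty u (.tree T)) := by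
  induction π generalizing s k with
  | var x A =>
    cases s with
    | var n => exact antisubst_var hu (.var x A) hs
    | lam => cases hs
    | app => cases hs
  | lam π ih =>
    cases s with
    | var n => exact antisubst_var hu (.lam π) hs
    | lam s =>
      obtain ⟨T, ⟨π'⟩, hT⟩ := ih s (k + 1) (Term.lam.inj hs)
      exact ⟨T, ⟨.lam (π'.castEnv (Env.insert_succ_cons _ _ _ _))⟩, hT⟩
    | app => cases hs
  | lamStar t =>
    cases s with
    | var n => exact antisubst_var hu (.lamStar t) hs
    | lam s =>
      exact ⟨.node [], ⟨(Deriv.lamStar s).castEnv (Env.insert_nil_empty k).symm⟩,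
        ⟨.none u⟩⟩
    | app => cases hs
  | app π₁ π₂ ih₁ ih₂ =>
    cases s with
    | var n => exact antisubst_var hu (.app π₁ π₂) hs
    | lam => cases hs
    | app s₁ s₂ =>
      obtain ⟨hs₁, hs₂⟩ := Term.app.inj hs
      obtain ⟨T₁, ⟨π₁'⟩, hT₁⟩ := ih₁ s₁ k hs₁
      obtain ⟨T₂, ⟨π₂'⟩, hT₂⟩ := ih₂ s₂ k hs₂
      exact ⟨T₁.cat T₂, ⟨(Deriv.app π₁' π₂').castEnv (Env.union_insert _ _ _ _ _)⟩,
        Deriv.nonempty_tree_cat hT₁ hT₂⟩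
  | many n Γs Gs prems ih =>
    choose Ts hprems hTs using fun i => ih i s k hs
    have π' := Deriv.many n (fun i => Env.insert k (Ts i) (Γs i)) Gs fun i => (hprems i).some
    rw [Env.unionF_insert, Env.wrap_insert] at π'
    exact ⟨(TreeTy.catF Ts).wrap, ⟨π'⟩,
      Deriv.nonempty_tree_wrap (Deriv.nonempty_tree_catF hTs)⟩
  | none =>
    exact ⟨.node [], ⟨(Deriv.none s).castEnv (Env.insert_nil_empty k).symm⟩, ⟨.none u⟩⟩

theorem subject_expansion_beta (hu : u.Closed) {s : Term} {A : LinTy}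
    (π : Deriv Env.empty (s.subst0 u) (.lin A)) :
    Nonempty (Deriv Env.empty (.app (.lam s) u) (.lin A)) := by
  obtain ⟨T, ⟨πs⟩, ⟨πu⟩⟩ := antisubst hu π s 0 rfl
  have πlam : Deriv Env.empty (.lam s) (.lin (.arr T A)) :=
    .lam (πs.castEnv (Env.insert_zero T Env.empty))
  exact ⟨(Deriv.app πlam πu).castEnv (Env.empty_union _)⟩

end AntiSubstitution

/-- subject expansion. -/
theorem subject_expansion {t u : Term} {A : LinTy}
    (hc : t.Closed) (hr : Whr t u) (π : Deriv Env.empty u (.lin A)) :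
    Nonempty (Deriv Env.empty t (.lin A)) := by
  induction hr generalizing A with
  | beta => exact subject_expansion_beta hc.2 π
  | appL v _ ih =>
    obtain ⟨Γ₁, Γ₂, T, hΓ, ⟨π₁⟩, ⟨π₂⟩⟩ := π.app_inv
    obtain ⟨rfl, rfl⟩ := Env.eq_empty_of_union_eq_empty hΓ.symm
    obtain ⟨π₁'⟩ := ih hc.1 π₁
    exact ⟨(Deriv.app π₁' π₂).castEnv (Env.empty_union _)⟩
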